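/- arXiv:2511.04229 — 4 statements merged into one kernel-verified Lean document; each statement's English description precedes it below -/
import Mathlib

section
/- Suppose B ∈ M_g(ℂ) is symmetric with negative definite real part, t is an involutive permutation of Fin g with permutation matrix T, and the conjugate matrix satisfies conj(B) = T B T. Define θ(z) = Σ_{N ∈ ℤ^g} exp((1/2) N^T B N + N^T z) for z ∈ ℂ^g. Then conj(θ(z)) = θ(T · conj(z)) for all z ∈ ℂ^g. -/
open Complex Matrix BigOperators

noncomputable def theta {g : ℕ} (B : Matrix (Fin g) (Fin g) ℂ) (z : Fin g → ℂ) : ℂ :=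
  ∑' N : Fin g → ℤ,
    Complex.exp ((1 / 2) * ((fun i => (N i : ℂ)) ⬝ᵥ B.mulVec (fun i => (N i : ℂ)))
      + (fun i => (N i : ℂ)) ⬝ᵥ z)

theorem theta_symmetry_separating (g : ℕ) (B : Matrix (Fin g) (Fin g) ℂ)
    (hsymm : B.IsSymm)
    (hneg : (-(Matrix.of fun i j => (B i j).re)).PosDef)
    (t : Equiv.Perm (Fin g)) (ht : ∀ j, t (t j) = j)
    (T : Matrix (Fin g) (Fin g) ℂ)
    (hT : ∀ p q, T p q = if p = t q then 1 else 0)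
    (hconj : B.map (starRingEnd ℂ) = T * B * T) :
    ∀ z : Fin g → ℂ,
      (starRingEnd ℂ) (theta B z) = theta B (T.mulVec fun i => (starRingEnd ℂ) (z i)) := by
  intro z
  have hTv : ∀ v : Fin g → ℂ, T.mulVec v = fun p => v (t p) := by
    intro v
    funext p
    simp only [Matrix.mulVec, dotProduct]
    rw [Finset.sum_eq_single (t p)]
    · rw [hT]; simp [ht]
    · intro q _ hq
      rw [hT, if_neg, zero_mul]
      intro h
      exact hq (by rw [h, ht])
    · simp
  have hvT : ∀ v : Fin g → ℂ, Matrix.vecMul v T = fun q => v (t q) := by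
    intro v
    funext q
    simp only [Matrix.vecMul, dotProduct]
    rw [Finset.sum_eq_single (t q)]
    · rw [hT]; simp
    · intro p _ hp
      rw [hT, if_neg hp, mul_zero]
    · simp
  unfold theta
  let e : (Fin g → ℤ) ≃ (Fin g → ℤ) :=
    ⟨fun N => N ∘ t, fun N => N ∘ t,
      fun N => funext fun i => by simp [Function.comp, ht],
      fun N => funext fun i => by simp [Function.comp, ht]⟩
  rw [show ∀ w : ℂ, (starRingEnd ℂ) w = star w from fun _ => rfl, tsum_star]
  simp only [show ∀ w : ℂ, star w = (starRingEnd ℂ) w from fun _ => rfl]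
  conv_rhs => rw [← Equiv.tsum_eq e]
  refine tsum_congr fun N => ?_
  set Nc : Fin g → ℂ := fun i => ((N i : ℤ) : ℂ) with hNc
  set Nc' : Fin g → ℂ := fun i => ((N (t i) : ℤ) : ℂ) with hNc'
  have hce : (fun i => ((e N i : ℤ) : ℂ)) = Nc' := rfl
  rw [hce, ← Complex.exp_conj]
  congr 1
  have hcNc : ∀ w : Fin g → ℂ,
      (starRingEnd ℂ) (Nc ⬝ᵥ w) = Nc ⬝ᵥ fun i => (starRingEnd ℂ) (w i) := by
    intro w
    simp only [dotProduct, map_sum, _root_.map_mul, hNc, map_intCast]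
  have h1 : (starRingEnd ℂ) (Nc ⬝ᵥ B.mulVec Nc) = Nc' ⬝ᵥ B.mulVec Nc' := by
    rw [hcNc]
    have hm : (fun i => (starRingEnd ℂ) (B.mulVec Nc i)) = (B.map (starRingEnd ℂ)).mulVec Nc := by
      funext i
      simp only [Matrix.mulVec, dotProduct, map_sum, _root_.map_mul, Matrix.map_apply,
        hNc, map_intCast]
    rw [hm, hconj, ← Matrix.mulVec_mulVec, ← Matrix.mulVec_mulVec,
      Matrix.dotProduct_mulVec, hvT, hTv]
  have h2 : Nc' ⬝ᵥ T.mulVec (fun i => (starRingEnd ℂ) (z i))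
      = Nc ⬝ᵥ fun i => (starRingEnd ℂ) (z i) := by
    rw [hTv]
    simp only [dotProduct, hNc', hNc]
    exact Equiv.sum_comp t (fun i => ((N i : ℤ) : ℂ) * (starRingEnd ℂ) (z i))
  rw [map_add, _root_.map_mul, h1, hcNc, ← h2,
    show (starRingEnd ℂ) (1 / 2 : ℂ) = 1 / 2 by rw [map_div₀, _root_.map_one, map_ofNat]]
end

section
/- Suppose B ∈ M_g(ℂ) is symmetric with negative definite real part, λ ∈ ℂ^g has all components in πi·ℤ, and conj(B) = B − 2·diag(λ). Define θ(z) = Σ_{N ∈ ℤ^g} exp((1/2) N^T B N + N^T z). Then conj(θ(z)) = θ(conj(z) + λ) for all z ∈ ℂ^g. -/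
open Complex Matrix BigOperators

theorem theta_symmetry_nonseparating (g : ℕ) (B : Matrix (Fin g) (Fin g) ℂ)
    (hsymm : B.IsSymm)
    (hneg : (-(Matrix.of fun i j => (B i j).re)).PosDef)
    (lam : Fin g → ℂ)
    (hlam : ∀ k, ∃ m : ℤ, lam k = (Real.pi : ℂ) * Complex.I * m)
    (hconj : B.map (starRingEnd ℂ) = B - (2 : ℂ) • Matrix.diagonal lam) :
    ∀ z : Fin g → ℂ,
      (starRingEnd ℂ) (theta B z) = theta B ((fun i => (starRingEnd ℂ) (z i)) + lam) := by
  intro z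
  -- choose integers m
  choose m hm using hlam
  -- choose half of n(n+1)
  have half : ∀ n : ℤ, ∃ t : ℤ, (n : ℂ) + (n : ℂ) * (n : ℂ) = 2 * t := by
    intro n
    obtain ⟨t, ht⟩ := Int.even_mul_succ_self n
    refine ⟨t, ?_⟩
    have : n * (n + 1) = 2 * t := by omega
    have := congrArg (fun k : ℤ => (k : ℂ)) this
    push_cast at this
    ring_nf at this ⊢
    linear_combination this
  unfold theta
  have hmap : (starRingEnd ℂ) (∑' N : Fin g → ℤ,
      Complex.exp ((1 / 2) * ((fun i => (N i : ℂ)) ⬝ᵥ B.mulVec (fun i => (N i : ℂ)))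
        + (fun i => (N i : ℂ)) ⬝ᵥ z)) =
      ∑' N : Fin g → ℤ, (starRingEnd ℂ)
        (Complex.exp ((1 / 2) * ((fun i => (N i : ℂ)) ⬝ᵥ B.mulVec (fun i => (N i : ℂ)))
          + (fun i => (N i : ℂ)) ⬝ᵥ z)) :=
    Complex.conjCLE.map_tsum
  rw [hmap]
  congr 1
  funext N
  set v : Fin g → ℂ := fun i => (N i : ℂ) with hv
  have hvconj : ∀ i, (starRingEnd ℂ) (v i) = v i := by
    intro i; simp [hv]
  rw [← Complex.exp_conj]
  -- compute conjugated argument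
  have hBconj : ∀ i j, (starRingEnd ℂ) (B i j) = B i j - 2 * (Matrix.diagonal lam) i j := by
    intro i j
    have := congrFun (congrFun hconj i) j
    simpa [Matrix.map_apply, Matrix.sub_apply, Matrix.smul_apply] using this
  have harg : (starRingEnd ℂ) ((1 / 2) * (v ⬝ᵥ B.mulVec v) + v ⬝ᵥ z) =
      (1 / 2) * (v ⬝ᵥ B.mulVec v) - (∑ i, lam i * v i * v i)
        + v ⬝ᵥ (fun i => (starRingEnd ℂ) (z i)) := by
    simp only [map_add, _root_.map_mul, dotProduct, Matrix.mulVec, map_sum]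
    push_cast
    simp only [_root_.map_mul, hvconj, hBconj, _root_.map_one, map_div₀, map_ofNat]
    have hd : ∀ x, v x * ∑ y, (B x y - 2 * Matrix.diagonal lam x y) * v y
        = v x * (∑ y, B x y * v y) - 2 * (lam x * v x * v x) := by
      intro x
      have h1 : ∑ y, (B x y - 2 * Matrix.diagonal lam x y) * v y
          = (∑ y, B x y * v y) - ∑ y, 2 * Matrix.diagonal lam x y * v y := by
        rw [← Finset.sum_sub_distrib]; exact Finset.sum_congr rfl fun y _ => by ring
      have h2 : ∑ y, 2 * Matrix.diagonal lam x y * v y = 2 * (lam x * v x) := by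
        rw [Finset.sum_eq_single x]
        · rw [Matrix.diagonal_apply_eq]; ring
        · intro j _ hj
          simp [Matrix.diagonal_apply_ne lam (Ne.symm hj)]
        · simp
      rw [h1, h2]; ring
    simp only [hd]
    rw [Finset.sum_sub_distrib, ← Finset.mul_sum]
    ring
  rw [harg]
  -- the difference is 2πi times an integer
  have key : ∀ i : Fin g, ∃ K : ℤ, lam i * v i + lam i * v i * v i = (K : ℂ) * (2 * Real.pi * Complex.I) := by
    intro i
    obtain ⟨t, ht⟩ := half (N i)
    refine ⟨m i * t, ?_⟩
    have hvi : v i = (N i : ℂ) := rfl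
    rw [hm i, hvi]
    push_cast
    calc (Real.pi : ℂ) * Complex.I * (m i) * (N i) + (Real.pi : ℂ) * Complex.I * (m i) * (N i) * (N i)
        = (Real.pi : ℂ) * Complex.I * (m i) * ((N i : ℂ) + (N i : ℂ) * (N i : ℂ)) := by ring
      _ = (m i : ℂ) * (t : ℂ) * (2 * Real.pi * Complex.I) := by rw [ht]; ring
  choose K hK using key
  have hsum : ∑ i, (lam i * v i + lam i * v i * v i) =
      ((∑ i, K i : ℤ) : ℂ) * (2 * Real.pi * Complex.I) := by
    push_cast
    rw [Finset.sum_mul]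
    exact Finset.sum_congr rfl fun i _ => hK i
  have hdot : v ⬝ᵥ ((fun i => (starRingEnd ℂ) (z i)) + lam) =
      v ⬝ᵥ (fun i => (starRingEnd ℂ) (z i)) + ∑ i, v i * lam i := by
    simp [dotProduct, Pi.add_apply, mul_add, Finset.sum_add_distrib]
  rw [hdot]
  have : (1 / 2) * (v ⬝ᵥ B.mulVec v) + (v ⬝ᵥ (fun i => (starRingEnd ℂ) (z i)) + ∑ i, v i * lam i) =
      ((1 / 2) * (v ⬝ᵥ B.mulVec v) - (∑ i, lam i * v i * v i)
        + v ⬝ᵥ (fun i => (starRingEnd ℂ) (z i))) + ((∑ i, K i : ℤ) : ℂ) * (2 * Real.pi * Complex.I) := by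
    rw [← hsum, Finset.sum_add_distrib]
    have hc : ∑ i, v i * lam i = ∑ i, lam i * v i :=
      Finset.sum_congr rfl fun i _ => by ring
    rw [hc]
    ring
  rw [this]
  rw [Complex.exp_add ((1 / 2) * (v ⬝ᵥ B.mulVec v) - (∑ i, lam i * v i * v i)
      + v ⬝ᵥ (fun i => (starRingEnd ℂ) (z i)))
      (((∑ i, K i : ℤ) : ℂ) * (2 * Real.pi * Complex.I)),
    Complex.exp_int_mul_two_pi_mul_I, mul_one]
end

section
/- Suppose Π ∈ M_h(ℂ) is symmetric with negative definite real part, t is an involutive permutation of Fin h with permutation matrix T, and conj(Π) = T Π T. Define the Prym theta function θ(z) = Σ_{N ∈ ℤ^h} exp((1/2) N^T Π N + N^T z). Then conj(θ(z)) = θ(T·conj(z)) for all z ∈ ℂ^h. -/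
open Complex Matrix BigOperators

/-- reindexing equivalence `N ↦ N ∘ t` for an involutive permutation `t`. -/
def permCompEquiv {g : ℕ} (t : Equiv.Perm (Fin g)) (ht : ∀ j, t (t j) = j) :
    (Fin g → ℤ) ≃ (Fin g → ℤ) where
  toFun N := fun i => N (t i)
  invFun N := fun i => N (t i)
  left_inv N := by funext i; simp [ht]
  right_inv N := by funext i; simp [ht]

theorem prym_theta_symmetry_separating (g : ℕ) (B : Matrix (Fin g) (Fin g) ℂ)
    (hsymm : B.IsSymm)
    (hneg : (-(Matrix.of fun i j => (B i j).re)).PosDef)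
    (t : Equiv.Perm (Fin g)) (ht : ∀ j, t (t j) = j)
    (T : Matrix (Fin g) (Fin g) ℂ)
    (hT : ∀ p q, T p q = if p = t q then 1 else 0)
    (hconj : B.map (starRingEnd ℂ) = T * B * T) :
    ∀ z : Fin g → ℂ,
      (starRingEnd ℂ) (theta B z) = theta B (T.mulVec fun i => (starRingEnd ℂ) (z i)) := by
  intro z
  -- T acts as precomposition with t
  have hTv : ∀ v : Fin g → ℂ, T.mulVec v = fun i => v (t i) := by
    intro v
    funext i
    have key : ∀ j, T i j * v j = if t i = j then v j else 0 := by
      intro j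
      rw [hT]
      by_cases h : i = t j
      · have h2 : t i = j := by rw [h, ht]
        simp [h, h2, ht]
      · have h2 : ¬ t i = j := by
          intro hc
          apply h
          rw [← hc, ht]
        simp [h, h2]
    simp only [Matrix.mulVec, dotProduct]
    rw [Finset.sum_congr rfl fun j _ => key j]
    simp
  -- dot product with a t-shifted vector : reindex
  have hShift : ∀ u v : Fin g → ℂ, u ⬝ᵥ (fun i => v (t i)) = (fun i => u (t i)) ⬝ᵥ v := by
    intro u v
    simp only [dotProduct]
    rw [← Equiv.sum_comp t (fun j => u (t j) * v j)]
    simp only [ht]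
  -- conjugation of a dot product with integer vector
  have hConjDot : ∀ (N : Fin g → ℤ) (w : Fin g → ℂ),
      (starRingEnd ℂ) ((fun i => (N i : ℂ)) ⬝ᵥ w)
        = (fun i => (N i : ℂ)) ⬝ᵥ (fun i => (starRingEnd ℂ) (w i)) := by
    intro N w
    simp [dotProduct, map_sum]
  -- pointwise identity
  have hpt : ∀ M : Fin g → ℤ,
      (starRingEnd ℂ) ((1 / 2) * ((fun i => (M i : ℂ)) ⬝ᵥ B.mulVec (fun i => (M i : ℂ)))
          + (fun i => (M i : ℂ)) ⬝ᵥ z)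
        = (1 / 2) * ((fun i => ((M (t i) : ℤ) : ℂ)) ⬝ᵥ B.mulVec (fun i => ((M (t i) : ℤ) : ℂ)))
          + (fun i => ((M (t i) : ℤ) : ℂ)) ⬝ᵥ T.mulVec (fun i => (starRingEnd ℂ) (z i)) := by
    intro M
    rw [map_add, _root_.map_mul]
    congr 1
    · congr 1
      · rw [map_div₀, _root_.map_one, map_ofNat]
      · rw [hConjDot]
        have hmv : (fun i => (starRingEnd ℂ) (B.mulVec (fun i => (M i : ℂ)) i))
            = (B.map (starRingEnd ℂ)).mulVec (fun i => (M i : ℂ)) := by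
          funext i
          simp [Matrix.mulVec, dotProduct, map_sum, Matrix.map]
        rw [hmv, hconj, ← Matrix.mulVec_mulVec, ← Matrix.mulVec_mulVec,
          hTv ((B.mulVec (T.mulVec fun i => (M i : ℂ)))), hShift,
          hTv (fun i => (M i : ℂ))]
    · rw [hConjDot, hTv]
      simp only [dotProduct]
      exact (Equiv.sum_comp t (fun j => (M j : ℂ) * (starRingEnd ℂ) (z j))).symm
  unfold theta
  rw [starRingEnd_apply, tsum_star, ← Equiv.tsum_eq (permCompEquiv t ht)]
  apply tsum_congr
  intro N
  rw [← starRingEnd_apply, ← Complex.exp_conj]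
  congr 1
  have := hpt (permCompEquiv t ht N)
  simp only [permCompEquiv, Equiv.coe_fn_mk, ht] at this
  exact this
end

section
/- Suppose Π ∈ M_h(ℂ) is symmetric with negative definite real part, λ ∈ ℂ^h has every component λ_k ∈ πi·ℤ, and conj(Π) = Π − 2·diag(λ). Let θ(z) = Σ_{N ∈ ℤ^h} exp((1/2) N^T Π N + N^T z). Then conj(θ(z)) = θ(conj(z) + λ) for all z ∈ ℂ^h. -/
open Complex Matrix BigOperators

lemma exp_lam_sq (m n : ℤ) :
    Complex.exp (-((Real.pi : ℂ) * Complex.I * m * (n : ℂ) ^ 2)) =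
    Complex.exp ((Real.pi : ℂ) * Complex.I * m * n) := by
  rw [Complex.exp_eq_exp_iff_exists_int]
  obtain ⟨t, ht⟩ := Int.even_mul_succ_self n
  refine ⟨-m * t, ?_⟩
  have hc : (n : ℂ) ^ 2 = 2 * t - n := by
    have h2 : ((n : ℂ)) * (n + 1) = (t : ℂ) + t := by exact_mod_cast congrArg (fun k : ℤ => (k : ℂ)) ht
    linear_combination h2
  rw [hc]
  push_cast
  ring

theorem prym_theta_symmetry_nonseparating (g : ℕ) (B : Matrix (Fin g) (Fin g) ℂ)
    (hsymm : B.IsSymm)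
    (hneg : (-(Matrix.of fun i j => (B i j).re)).PosDef)
    (lam : Fin g → ℂ)
    (hlam : ∀ k, ∃ m : ℤ, lam k = (Real.pi : ℂ) * Complex.I * m)
    (hconj : B.map (starRingEnd ℂ) = B - (2 : ℂ) • Matrix.diagonal lam) :
    ∀ z : Fin g → ℂ,
      (starRingEnd ℂ) (theta B z) = theta B ((fun i => (starRingEnd ℂ) (z i)) + lam) := by
  intro z
  unfold theta
  rw [Complex.conj_tsum]
  refine tsum_congr fun N => ?_
  rw [← Complex.exp_conj]
  set Nc : Fin g → ℂ := fun i => (N i : ℂ) with hNc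
  have h1 : (starRingEnd ℂ) (Nc ⬝ᵥ B.mulVec Nc)
      = Nc ⬝ᵥ B.mulVec Nc - 2 * ∑ i, lam i * (N i : ℂ) ^ 2 := by
    have hc : (starRingEnd ℂ) (Nc ⬝ᵥ B.mulVec Nc)
        = Nc ⬝ᵥ (B.map (starRingEnd ℂ)).mulVec Nc := by
      simp [dotProduct, mulVec, map_sum, Matrix.map_apply, hNc]
    rw [hc, hconj, Matrix.sub_mulVec, dotProduct_sub, Matrix.smul_mulVec,
      dotProduct_smul]
    simp only [Matrix.mulVec_diagonal, dotProduct, smul_eq_mul, hNc, Finset.mul_sum]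
    congr 1
    refine Finset.sum_congr rfl fun i _ => ?_
    ring
  have h2 : (starRingEnd ℂ) (Nc ⬝ᵥ z) = Nc ⬝ᵥ fun i => (starRingEnd ℂ) (z i) := by
    simp [dotProduct, map_sum, hNc]
  have h3 : Nc ⬝ᵥ ((fun i => (starRingEnd ℂ) (z i)) + lam)
      = (Nc ⬝ᵥ fun i => (starRingEnd ℂ) (z i)) + ∑ i, lam i * (N i : ℂ) := by
    rw [dotProduct_add]
    congr 1
    simp [dotProduct, hNc, mul_comm]
  rw [map_add, _root_.map_mul, h1, h2, h3]
  have : (starRingEnd ℂ) (1 / 2 : ℂ) = 1 / 2 := by rw [map_div₀, _root_.map_one, map_ofNat]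
  rw [this]
  set A : ℂ := 1 / 2 * (Nc ⬝ᵥ B.mulVec Nc) + (Nc ⬝ᵥ fun i => (starRingEnd ℂ) (z i)) with hA
  have hL : 1 / 2 * (Nc ⬝ᵥ B.mulVec Nc - 2 * ∑ i, lam i * (N i : ℂ) ^ 2)
      + (Nc ⬝ᵥ fun i => (starRingEnd ℂ) (z i))
      = A + ∑ i, -(lam i * (N i : ℂ) ^ 2) := by
    rw [hA, Finset.sum_neg_distrib]
    ring
  rw [hL]
  simp only [hA, Complex.exp_add, Complex.exp_sum]
  rw [mul_assoc]
  refine congrArg _ (congrArg _ ?_)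
  refine Finset.prod_congr rfl fun i _ => ?_
  obtain ⟨m, hm⟩ := hlam i
  rw [hm]
  exact exp_lam_sq m (N i)
end
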